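/- Let ε > 0, α ∈ ℝ, and let h : Π_ε → ℂ be holomorphic, 1-periodic, and bounded. Then there exists δ > 0 such that for every ζ ∈ ℂ with |ζ| < δ, the map φ_ζ = Id + ζh is injective on Π_{0.9ε} and its image contains Π_{ε/2}; and for every fixed z ∈ Π_{ε/2}, the function ζ ↦ (φ_ζ ∘ T_α ∘ φ_ζ^{−1})(z) (where T_α(w) = w + α) is holomorphic in ζ on {|ζ| < δ} with derivative at ζ = 0 equal to h(z + α) − h(z). In other words, the vector field v produced by the conjugation deformation R_α + ζv + o(ζ) = (Id + ζh) ∘ R_α ∘ (Id + ζh)^{−1} is exactly v(z) = h(z + α) − h(z). -/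

import Mathlib

open Filter Set

/-- The horizontal strip `Π_ε = {z : |Im z| < ε}` (a lift of the cylinder). -/
def Strip (ε : ℝ) : Set ℂ := {z : ℂ | |z.im| < ε}

lemma mem_strip {a : ℝ} {z : ℂ} : z ∈ Strip a ↔ |z.im| < a := Iff.rfl

lemma isOpen_strip (a : ℝ) : IsOpen (Strip a) :=
  isOpen_lt (continuous_abs.comp Complex.continuous_im) continuous_const

lemma convex_strip (a : ℝ) : Convex ℝ (Strip a) := by
  have : Strip a = {z : ℂ | z.im < a} ∩ {z : ℂ | -a < z.im} := by
    ext z; simp [Strip, abs_lt, and_comm]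
  rw [this]
  exact (convex_halfSpace_im_lt (r := a)).inter (convex_halfSpace_im_gt (r := -a))

lemma strip_mono {a b : ℝ} (hab : a ≤ b) : Strip a ⊆ Strip b :=
  fun _ hz => lt_of_lt_of_le hz hab

/-- For a bounded `1`-periodic holomorphic `h` on `Π_ε` and small `ζ`, the map
`φ_ζ = Id + ζh` is injective on `Π_{0.9ε}` with image containing `Π_{ε/2}`, and for each
`z ∈ Π_{ε/2}` the map `ζ ↦ (φ_ζ ∘ T_α ∘ φ_ζ⁻¹)(z)` is holomorphic in `ζ` with derivative
`h(z+α) − h(z)` at `ζ = 0`: the vector field of the conjugation deformation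
`(Id + ζh) ∘ R_α ∘ (Id + ζh)⁻¹` is `v(z) = h(z+α) − h(z)`. -/
theorem conjugation_deformation_vector_field (ε : ℝ) (hε : 0 < ε) (α : ℝ) (h : ℂ → ℂ)
    (hval : DifferentiableOn ℂ h (Strip ε))
    (hper : ∀ z ∈ Strip ε, h (z + 1) = h z)
    (hbdd : ∃ M : ℝ, ∀ z ∈ Strip ε, ‖h z‖ ≤ M) :
    ∃ δ > (0:ℝ),
      (∀ ζ : ℂ, ‖ζ‖ < δ →
        Set.InjOn (fun z => z + ζ * h z) (Strip (0.9 * ε)) ∧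
        Strip (ε / 2) ⊆ (fun z => z + ζ * h z) '' Strip (0.9 * ε)) ∧
      (∀ z ∈ Strip (ε / 2), ∀ g : ℂ → ℂ,
        (∀ ζ ∈ Metric.ball (0 : ℂ) δ, ∃ w ∈ Strip (0.9 * ε),
          w + ζ * h w = z ∧ g ζ = (w + (α : ℂ)) + ζ * h (w + (α : ℂ))) →
        DifferentiableOn ℂ g (Metric.ball (0 : ℂ) δ) ∧
        HasDerivAt g (h (z + (α : ℂ)) - h z) 0) := by
  classical
  obtain ⟨M, hM⟩ := hbdd
  have h0mem : (0:ℂ) ∈ Strip ε := by simpa [mem_strip] using hε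
  have hM0 : 0 ≤ M := le_trans (norm_nonneg _) (hM 0 h0mem)
  -- differentiability at points of the strip
  have hdAt : ∀ z ∈ Strip ε, DifferentiableAt ℂ h z := fun z hz =>
    hval.differentiableAt ((isOpen_strip ε).mem_nhds hz)
  -- derivative bound on Strip (0.9 ε)
  set L : ℝ := (2*M+1) / (ε/20) with hLdef
  have hLpos : 0 < L := div_pos (by linarith) (by linarith)
  have hderiv_bd : ∀ w ∈ Strip (0.9*ε), ‖deriv h w‖ ≤ L := by
    intro w hw
    have hball : Metric.ball w (ε/20) ⊆ Strip ε := by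
      intro x hx
      have h1 : |x.im - w.im| ≤ ‖x - w‖ := by
        simpa using Complex.abs_im_le_norm (x - w)
      have h2 : ‖x - w‖ < ε/20 := by simpa [Metric.mem_ball, dist_eq_norm] using hx
      have hw' : |w.im| < 0.9*ε := hw
      have : |x.im| ≤ |x.im - w.im| + |w.im| := by
        simpa using abs_add_le (x.im - w.im) w.im
      simp only [mem_strip]
      nlinarith
    have hmaps : MapsTo h (Metric.ball w (ε/20)) (Metric.ball (h w) (2*M+1)) := by
      intro x hx
      have hx' := hball hx
      have hwε : w ∈ Strip ε := hball (Metric.mem_ball_self (by linarith))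
      have := hM x hx'
      have := hM w hwε
      have : ‖h x - h w‖ ≤ 2*M := by
        calc ‖h x - h w‖ ≤ ‖h x‖ + ‖h w‖ := norm_sub_le _ _
        _ ≤ 2*M := by linarith [hM x hx', hM w hwε]
      simp only [Metric.mem_ball, dist_eq_norm]
      linarith
    exact Complex.norm_deriv_le_div_of_mapsTo_ball (hval.mono hball) (hmaps.mono_right Metric.ball_subset_closedBall) (by linarith)
  -- Lipschitz bound on Strip (0.9 ε)
  have hsub09 : Strip (0.9*ε) ⊆ Strip ε := strip_mono (by nlinarith)
  have hLip : ∀ x ∈ Strip (0.9*ε), ∀ y ∈ Strip (0.9*ε), ‖h y - h x‖ ≤ L * ‖y - x‖ := by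
    intro x hx y hy
    refine (convex_strip (0.9*ε)).norm_image_sub_le_of_norm_fderiv_le
      (fun u hu => hdAt u (hsub09 hu)) (fun u hu => ?_) hx hy
    rw [← norm_deriv_eq_norm_fderiv]
    exact hderiv_bd u hu
  -- choice of δ
  set δ : ℝ := min (1/(2*L)) (ε/(10*(M+1))) with hδdef
  have hδpos : 0 < δ := lt_min (by positivity) (by positivity)
  have hδL : δ * L ≤ 1/2 := by
    have h1 : δ ≤ 1/(2*L) := min_le_left _ _
    have h2 : (1/(2*L)) * L = 1/2 := by field_simp
    nlinarith
  have hδM : δ * M ≤ ε/10 := by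
    have h1 : δ ≤ ε/(10*(M+1)) := min_le_right _ _
    have h2 : ε/(10*(M+1)) * M ≤ ε/10 := by
      rw [div_mul_eq_mul_div, div_le_div_iff₀ (by positivity) (by norm_num)]
      nlinarith
    nlinarith
  -- contraction estimate
  have hcontr : ∀ ζ : ℂ, ‖ζ‖ < δ → ∀ a ∈ Strip (0.9*ε), ∀ b ∈ Strip (0.9*ε),
      ‖ζ * h a - ζ * h b‖ ≤ (1/2) * ‖a - b‖ := by
    intro ζ hζ a ha b hb
    have : ζ * h a - ζ * h b = ζ * (h a - h b) := by ring
    rw [this, norm_mul]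
    have h1 : ‖h a - h b‖ ≤ L * ‖a - b‖ := hLip b hb a ha
    have h2 : ‖ζ‖ * ‖h a - h b‖ ≤ δ * (L * ‖a - b‖) := by
      apply mul_le_mul (le_of_lt hζ) h1 (norm_nonneg _) (le_of_lt hδpos)
    calc ‖ζ‖ * ‖h a - h b‖ ≤ δ * (L * ‖a - b‖) := h2
    _ = (δ * L) * ‖a - b‖ := by ring
    _ ≤ (1/2) * ‖a - b‖ := by nlinarith [norm_nonneg (a - b)]
  -- injectivity
  have hinj : ∀ ζ : ℂ, ‖ζ‖ < δ → Set.InjOn (fun z => z + ζ * h z) (Strip (0.9*ε)) := by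
    intro ζ hζ x hx y hy hxy
    simp only at hxy
    have hdiff : x - y = ζ * h y - ζ * h x := by
      have := hxy; linear_combination hxy
    have h1 : ‖x - y‖ ≤ (1/2) * ‖y - x‖ := by
      rw [hdiff]; exact hcontr ζ hζ y hy x hx
    rw [norm_sub_rev y x] at h1
    have h0 : ‖x - y‖ = 0 := by linarith [norm_nonneg (x - y)]
    exact norm_sub_eq_zero_iff.mp h0
  -- membership facts from the 0.6ε closed strip
  have h06ε : ∀ w : ℂ, |w.im| ≤ 0.6*ε → w ∈ Strip ε := by
    intro w hw; simp only [mem_strip]; nlinarith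
  have h0609 : ∀ w : ℂ, |w.im| ≤ 0.6*ε → w ∈ Strip (0.9*ε) := by
    intro w hw; simp only [mem_strip]; nlinarith
  -- key construction: holomorphic family of preimages
  have key : ∀ z ∈ Strip (ε/2), ∃ w : ℂ → ℂ,
      DifferentiableOn ℂ w (Metric.ball (0:ℂ) δ) ∧
      ∀ ζ ∈ Metric.ball (0:ℂ) δ, |(w ζ).im| ≤ 0.6*ε ∧ w ζ + ζ * h (w ζ) = z := by
    intro z hz
    have hzim : |z.im| < ε/2 := hz
    set u : ℕ → ℂ → ℂ := fun n =>
      Nat.rec (fun _ => z) (fun _ un ζ => z - ζ * h (un ζ)) n with hudef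
    have hu0 : ∀ ζ, u 0 ζ = z := fun _ => rfl
    have huS : ∀ n ζ, u (n+1) ζ = z - ζ * h (u n ζ) := fun _ _ => rfl
    -- strip bound for iterates
    have hA : ∀ n, ∀ ζ ∈ Metric.ball (0:ℂ) δ, |(u n ζ).im| ≤ 0.6*ε := by
      intro n
      induction n with
      | zero => intro ζ hζ; rw [hu0]; nlinarith
      | succ n ih =>
        intro ζ hζ
        have hζn : ‖ζ‖ < δ := by simpa [mem_ball_zero_iff] using hζ
        have hmem : u n ζ ∈ Strip ε := h06ε _ (ih ζ hζ)
        have hnorm : ‖ζ * h (u n ζ)‖ ≤ δ * M := by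
          rw [norm_mul]
          exact mul_le_mul (le_of_lt hζn) (hM _ hmem) (norm_nonneg _) (le_of_lt hδpos)
        have him : |(ζ * h (u n ζ)).im| ≤ ‖ζ * h (u n ζ)‖ := by
          simpa using Complex.abs_im_le_norm (ζ * h (u n ζ))
        rw [huS]
        have : (z - ζ * h (u n ζ)).im = z.im - (ζ * h (u n ζ)).im := by simp
        rw [this]
        have habs : |z.im - (ζ * h (u n ζ)).im| ≤ |z.im| + |(ζ * h (u n ζ)).im| :=
          abs_sub _ _
        nlinarith
    -- differentiability of iterates
    have hB : ∀ n, DifferentiableOn ℂ (u n) (Metric.ball (0:ℂ) δ) := by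
      intro n
      induction n with
      | zero => simpa [hudef] using (differentiableOn_const z)
      | succ n ih =>
        have : DifferentiableOn ℂ (fun ζ => z - ζ * h (u n ζ)) (Metric.ball (0:ℂ) δ) := by
          apply DifferentiableOn.sub (differentiableOn_const z)
          apply DifferentiableOn.mul differentiableOn_id
          intro ζ hζ
          exact (hdAt _ (h06ε _ (hA n ζ hζ))).comp_differentiableWithinAt ζ (ih ζ hζ)
        exact this
    -- geometric decay of increments
    have hC : ∀ n, ∀ ζ ∈ Metric.ball (0:ℂ) δ,
        ‖u (n+1) ζ - u n ζ‖ ≤ (δ*M) * (1/2)^n := by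
      intro n
      induction n with
      | zero =>
        intro ζ hζ
        have hζn : ‖ζ‖ < δ := by simpa [mem_ball_zero_iff] using hζ
        have e1 : u (0+1) ζ = z - ζ * h (u 0 ζ) := huS 0 ζ
        have heq : u (0+1) ζ - u 0 ζ = -(ζ * h z) := by
          rw [e1, hu0]; ring
        rw [heq, norm_neg, norm_mul]
        have hzε : z ∈ Strip ε := strip_mono (by linarith) hz
        simpa using mul_le_mul (le_of_lt hζn) (hM z hzε) (norm_nonneg _) (le_of_lt hδpos)
      | succ n ih =>
        intro ζ hζ
        have hζn : ‖ζ‖ < δ := by simpa [mem_ball_zero_iff] using hζ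
        have e1 : u (n+1+1) ζ = z - ζ * h (u (n+1) ζ) := huS (n+1) ζ
        have e2 : u (n+1) ζ = z - ζ * h (u n ζ) := huS n ζ
        have heq : u (n+1+1) ζ - u (n+1) ζ = ζ * h (u n ζ) - ζ * h (u (n+1) ζ) := by
          rw [e1]; linear_combination e2
        rw [heq]
        have hc2 := hcontr ζ hζn (u n ζ) (h0609 _ (hA n ζ hζ)) (u (n+1) ζ)
          (h0609 _ (hA (n+1) ζ hζ))
        have hrev : ‖u n ζ - u (n+1) ζ‖ = ‖u (n+1) ζ - u n ζ‖ := norm_sub_rev _ _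
        calc ‖ζ * h (u n ζ) - ζ * h (u (n+1) ζ)‖ ≤ (1/2) * ‖u n ζ - u (n+1) ζ‖ := hc2
        _ = (1/2) * ‖u (n+1) ζ - u n ζ‖ := by rw [hrev]
        _ ≤ (1/2) * ((δ*M) * (1/2)^n) := by nlinarith [ih ζ hζ]
        _ = (δ*M) * (1/2)^(n+1) := by ring
    -- Cauchy limit
    have hCauchy : ∀ ζ ∈ Metric.ball (0:ℂ) δ, CauchySeq (fun n => u n ζ) := by
      intro ζ hζ
      apply cauchySeq_of_le_geometric (1/2) (δ*M) (by norm_num)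
      intro n
      rw [dist_eq_norm, norm_sub_rev]
      exact hC n ζ hζ
    set w : ℂ → ℂ := fun ζ => limUnder atTop (fun n => u n ζ) with hwdef
    have hwlim : ∀ ζ ∈ Metric.ball (0:ℂ) δ,
        Tendsto (fun n => u n ζ) atTop (nhds (w ζ)) := by
      intro ζ hζ
      exact (hCauchy ζ hζ).tendsto_limUnder
    have hwdist : ∀ n, ∀ ζ ∈ Metric.ball (0:ℂ) δ,
        dist (u n ζ) (w ζ) ≤ (δ*M) * (1/2)^n / (1 - 1/2) := by
      intro n ζ hζ
      refine dist_le_of_le_geometric_of_tendsto (1/2) (δ*M) (by norm_num)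
        (fun k => ?_) (hwlim ζ hζ) n
      rw [dist_eq_norm, norm_sub_rev]
      exact hC k ζ hζ
    -- uniform convergence, hence differentiability of w
    have hunif : TendstoUniformlyOn u w atTop (Metric.ball (0:ℂ) δ) := by
      rw [Metric.tendstoUniformlyOn_iff]
      intro η hη
      have htend : Tendsto (fun n : ℕ => (δ*M) * (1/2:ℝ)^n / (1 - 1/2)) atTop (nhds 0) := by
        have hp : Tendsto (fun n : ℕ => ((1:ℝ)/2)^n) atTop (nhds 0) :=
          tendsto_pow_atTop_nhds_zero_of_lt_one (by norm_num) (by norm_num)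
        have := (hp.const_mul (δ*M)).div_const (1 - 1/2)
        simpa using this
      filter_upwards [htend.eventually (gt_mem_nhds hη)] with n hn ζ hζ
      calc dist (w ζ) (u n ζ) = dist (u n ζ) (w ζ) := dist_comm _ _
      _ ≤ (δ*M) * (1/2)^n / (1 - 1/2) := hwdist n ζ hζ
      _ < η := hn
    have hwdiff : DifferentiableOn ℂ w (Metric.ball (0:ℂ) δ) :=
      hunif.tendstoLocallyUniformlyOn.differentiableOn
        (Eventually.of_forall hB) Metric.isOpen_ball
    refine ⟨w, hwdiff, fun ζ hζ => ?_⟩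
    have hlim := hwlim ζ hζ
    have hwmem : |(w ζ).im| ≤ 0.6*ε := by
      have him : Tendsto (fun n => |(u n ζ).im|) atTop (nhds |(w ζ).im|) :=
        ((Complex.continuous_im.tendsto _).comp hlim).abs
      exact le_of_tendsto him (Eventually.of_forall (fun n => hA n ζ hζ))
    refine ⟨hwmem, ?_⟩
    -- pass to the limit in the recursion
    have hcont : ContinuousAt h (w ζ) := (hdAt _ (h06ε _ hwmem)).continuousAt
    have h1 : Tendsto (fun n => u (n+1) ζ) atTop (nhds (w ζ)) :=
      hlim.comp (tendsto_add_atTop_nat 1)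
    have h2 : Tendsto (fun n => z - ζ * h (u n ζ)) atTop (nhds (z - ζ * h (w ζ))) := by
      exact tendsto_const_nhds.sub (tendsto_const_nhds.mul ((hcont.tendsto).comp hlim))
    have h3 : w ζ = z - ζ * h (w ζ) := by
      refine tendsto_nhds_unique h1 ?_
      convert h2 using 2
    linear_combination h3
  refine ⟨δ, hδpos, ?_, ?_⟩
  · -- injectivity and surjectivity
    intro ζ hζ
    refine ⟨hinj ζ hζ, ?_⟩
    intro z hz
    obtain ⟨w, hwdiff, hw⟩ := key z hz
    have hζb : ζ ∈ Metric.ball (0:ℂ) δ := by simpa [mem_ball_zero_iff] using hζ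
    obtain ⟨hwmem, hweq⟩ := hw ζ hζb
    exact ⟨w ζ, h0609 _ hwmem, hweq⟩
  · -- holomorphic dependence and derivative
    intro z hz g hg
    obtain ⟨w, hwdiff, hw⟩ := key z hz
    have h0ball : (0:ℂ) ∈ Metric.ball (0:ℂ) δ := Metric.mem_ball_self hδpos
    -- g agrees with the explicit formula
    have hgw : ∀ ζ ∈ Metric.ball (0:ℂ) δ, g ζ = (w ζ + (α:ℂ)) + ζ * h (w ζ + (α:ℂ)) := by
      intro ζ hζ
      obtain ⟨w', hw'mem, hw'eq, hgζ⟩ := hg ζ hζ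
      obtain ⟨hwmem, hweq⟩ := hw ζ hζ
      have hζn : ‖ζ‖ < δ := by simpa [mem_ball_zero_iff] using hζ
      have hww : w' = w ζ := by
        refine hinj ζ hζn hw'mem (h0609 _ hwmem) ?_
        simp only
        rw [hw'eq, hweq]
      rw [hgζ, hww]
    have hmemα : ∀ ζ ∈ Metric.ball (0:ℂ) δ, (w ζ + (α:ℂ)) ∈ Strip ε := by
      intro ζ hζ
      have him : (w ζ + (α:ℂ)).im = (w ζ).im := by simp
      apply h06ε
      rw [him]
      exact (hw ζ hζ).1
    have hwαdiff : DifferentiableOn ℂ (fun ζ => w ζ + (α:ℂ)) (Metric.ball (0:ℂ) δ) :=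
      hwdiff.add_const _
    have hGdiff : DifferentiableOn ℂ
        (fun ζ => (w ζ + (α:ℂ)) + ζ * h (w ζ + (α:ℂ))) (Metric.ball (0:ℂ) δ) := by
      apply DifferentiableOn.add hwαdiff
      apply DifferentiableOn.mul differentiableOn_id
      intro ζ hζ
      exact (hdAt _ (hmemα ζ hζ)).comp_differentiableWithinAt ζ (hwαdiff ζ hζ)
    constructor
    · exact hGdiff.congr hgw
    -- derivative computation at 0
    have hw0z : w 0 = z := by
      have := (hw 0 h0ball).2
      simpa using this
    have hwd0 : DifferentiableAt ℂ w 0 :=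
      hwdiff.differentiableAt (Metric.isOpen_ball.mem_nhds h0ball)
    set c : ℂ := deriv w 0 with hcdef
    have hw0 : HasDerivAt w c 0 := hwd0.hasDerivAt
    have hzmem : z ∈ Strip ε := strip_mono (by linarith) hz
    have hzαmem : (z + (α:ℂ)) ∈ Strip ε := by
      have : (z + (α:ℂ)).im = z.im := by simp
      simpa [mem_strip, this] using hzmem
    have hhw0 : HasDerivAt h (deriv h z) (w 0) := by
      rw [hw0z]; exact (hdAt z hzmem).hasDerivAt
    have hcomp : HasDerivAt (fun ζ => h (w ζ)) (deriv h z * c) 0 := by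
      exact hhw0.comp 0 hw0
    have hprod : HasDerivAt (fun ζ : ℂ => ζ * h (w ζ))
        (1 * h (w 0) + 0 * (deriv h z * c)) 0 := (hasDerivAt_id' (0:ℂ)).mul hcomp
    have hF : HasDerivAt (fun ζ => w ζ + ζ * h (w ζ))
        (c + (1 * h (w 0) + 0 * (deriv h z * c))) 0 := hw0.add hprod
    have hFconst : (fun ζ => w ζ + ζ * h (w ζ)) =ᶠ[nhds (0:ℂ)] (fun _ => z) := by
      filter_upwards [Metric.isOpen_ball.mem_nhds h0ball] with ζ hζ using (hw ζ hζ).2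
    have hF0 : HasDerivAt (fun ζ : ℂ => w ζ + ζ * h (w ζ)) 0 0 :=
      (hasDerivAt_const (0:ℂ) z).congr_of_eventuallyEq hFconst
    have hceq : c + (1 * h (w 0) + 0 * (deriv h z * c)) = 0 := hF.unique hF0
    have hc : c = - h z := by
      rw [hw0z] at hceq
      linear_combination hceq
    have hwα0 : w 0 + (α:ℂ) = z + (α:ℂ) := by rw [hw0z]
    have hhwα0 : HasDerivAt h (deriv h (z + (α:ℂ))) (w 0 + (α:ℂ)) := by
      rw [hwα0]; exact (hdAt _ hzαmem).hasDerivAt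
    have hwαd : HasDerivAt (fun ζ => w ζ + (α:ℂ)) c 0 := hw0.add_const _
    have hcompα : HasDerivAt (fun ζ => h (w ζ + (α:ℂ))) (deriv h (z + (α:ℂ)) * c) 0 := by
      exact hhwα0.comp 0 hwαd
    have hprodα : HasDerivAt (fun ζ : ℂ => ζ * h (w ζ + (α:ℂ)))
        (1 * h (w 0 + (α:ℂ)) + 0 * (deriv h (z + (α:ℂ)) * c)) 0 := (hasDerivAt_id' (0:ℂ)).mul hcompα
    have hG : HasDerivAt (fun ζ => (w ζ + (α:ℂ)) + ζ * h (w ζ + (α:ℂ)))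
        (c + (1 * h (w 0 + (α:ℂ)) + 0 * (deriv h (z + (α:ℂ)) * c))) 0 := hwαd.add hprodα
    have hgG : g =ᶠ[nhds (0:ℂ)] (fun ζ => (w ζ + (α:ℂ)) + ζ * h (w ζ + (α:ℂ))) := by
      filter_upwards [Metric.isOpen_ball.mem_nhds h0ball] with ζ hζ using hgw ζ hζ
    have hgd : HasDerivAt g (c + (1 * h (w 0 + (α:ℂ)) + 0 * (deriv h (z + (α:ℂ)) * c))) 0 :=
      hG.congr_of_eventuallyEq hgG
    have hfinal : c + (1 * h (w 0 + (α:ℂ)) + 0 * (deriv h (z + (α:ℂ)) * c))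
        = h (z + (α:ℂ)) - h z := by
      rw [hwα0, hc]; ring
    rw [hfinal] at hgd
    exact hgd
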